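/- Under the hypotheses of diagonal boundedness, the limit kernel K_∞(s,t) = lim_n K_n(s,t) satisfies L K_∞ = K_∞ and K_∞ − K is positive definite; moreover K_∞ is minimal among L-invariant majorants: if J is a positive definite kernel with J − K positive definite and LJ = J, then J − K_∞ is positive definite. -/

import Mathlib

open scoped ComplexOrder

open Filter

def IsPD {X : Type*} (J : X → X → ℂ) : Prop :=
  ∀ (r : ℕ) (x : Fin r → X) (c : Fin r → ℂ),
    0 ≤ ∑ a, ∑ b, (starRingEnd ℂ) (c a) * c b * J (x a) (x b)

noncomputable def Lop {X : Type*} {m : ℕ} (φ : Fin m → X → X) (J : X → X → ℂ) : X → X → ℂ :=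
  fun s t => ∑ i, J (φ i s) (φ i t)

/-!
The differences `K_{n+1} - K_n = Lⁿ(LK - K)` are positive definite because `L` preserves
positive definiteness, so `K_n - K` is positive definite; if `LJ = J` and `J - K` is positive
definite then so is `J - K_n = Lⁿ(J - K)`. Positive definiteness survives pointwise limits, and
`L` commutes with them since it is a finite sum of evaluations.
-/

namespace IsPD

variable {X : Type*}

theorem add {A B : X → X → ℂ} (hA : IsPD A) (hB : IsPD B) : IsPD (A + B) := by
  intro r x c
  have hsplit : ∑ a, ∑ b, (starRingEnd ℂ) (c a) * c b * (A + B) (x a) (x b)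
      = (∑ a, ∑ b, (starRingEnd ℂ) (c a) * c b * A (x a) (x b))
        + ∑ a, ∑ b, (starRingEnd ℂ) (c a) * c b * B (x a) (x b) := by
    simp only [Pi.add_apply, mul_add, Finset.sum_add_distrib]
  rw [hsplit]
  exact add_nonneg (hA r x c) (hB r x c)

theorem of_tendsto {F : ℕ → X → X → ℂ} {G : X → X → ℂ}
    (hlim : ∀ s t, Tendsto (fun n => F n s t) atTop (nhds (G s t)))
    (hF : ∀ n, IsPD (F n)) : IsPD G := by
  intro r x c
  have hsum : Tendsto (fun n => ∑ a, ∑ b, (starRingEnd ℂ) (c a) * c b * F n (x a) (x b)) atTop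
      (nhds (∑ a, ∑ b, (starRingEnd ℂ) (c a) * c b * G (x a) (x b))) :=
    tendsto_finsetSum _ fun a _ => tendsto_finsetSum _ fun b _ => (hlim (x a) (x b)).const_mul _
  exact ge_of_tendsto' hsum fun n => hF n r x c

theorem lop {m : ℕ} (φ : Fin m → X → X) {J : X → X → ℂ} (hJ : IsPD J) :
    IsPD (Lop φ J) := by
  intro r x c
  have hswap : ∑ a, ∑ b, (starRingEnd ℂ) (c a) * c b * Lop φ J (x a) (x b)
      = ∑ i, ∑ a, ∑ b, (starRingEnd ℂ) (c a) * c b * J (φ i (x a)) (φ i (x b)) := by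
    simp only [Lop, Finset.mul_sum]
    calc ∑ a, ∑ b, ∑ i, (starRingEnd ℂ) (c a) * c b * J (φ i (x a)) (φ i (x b))
        = ∑ a, ∑ i, ∑ b, (starRingEnd ℂ) (c a) * c b * J (φ i (x a)) (φ i (x b)) :=
          Finset.sum_congr rfl fun a _ => Finset.sum_comm
      _ = ∑ i, ∑ a, ∑ b, (starRingEnd ℂ) (c a) * c b * J (φ i (x a)) (φ i (x b)) :=
          Finset.sum_comm
  rw [hswap]
  exact Finset.sum_nonneg fun i _ => hJ r (fun a => φ i (x a)) c

end IsPD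

section Lop

variable {X : Type*} {m : ℕ} (φ : Fin m → X → X)

theorem Lop_sub (A B : X → X → ℂ) : Lop φ (A - B) = Lop φ A - Lop φ B := by
  funext s t
  simp only [Lop, Pi.sub_apply, Finset.sum_sub_distrib]

theorem Lop_iterate_sub (n : ℕ) (A B : X → X → ℂ) :
    (Lop φ)^[n] (A - B) = (Lop φ)^[n] A - (Lop φ)^[n] B := by
  induction n with
  | zero => rfl
  | succ n ih => simp only [Function.iterate_succ_apply', ih, Lop_sub]

theorem isPD_iterate_Lop {J : X → X → ℂ} (hJ : IsPD J) (n : ℕ) : IsPD ((Lop φ)^[n] J) := by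
  induction n with
  | zero => exact hJ
  | succ n ih => simpa only [Function.iterate_succ_apply'] using ih.lop φ

theorem isPD_iterate_Lop_sub_self {K : X → X → ℂ} (hsub : IsPD (Lop φ K - K)) (n : ℕ) :
    IsPD ((Lop φ)^[n] K - K) := by
  induction n with
  | zero => intro r x c; simp
  | succ n ih =>
    have hstep : IsPD ((Lop φ)^[n + 1] K - (Lop φ)^[n] K) := by
      simpa only [Lop_iterate_sub, ← Function.iterate_succ_apply] using isPD_iterate_Lop φ hsub n
    simpa only [sub_add_sub_cancel] using hstep.add ih

theorem isPD_sub_iterate_Lop_of_fixed {J K : X → X → ℂ} (hJK : IsPD (J - K))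
    (hLJ : Lop φ J = J) (n : ℕ) : IsPD (J - (Lop φ)^[n] K) := by
  simpa only [Lop_iterate_sub, Function.iterate_fixed hLJ] using isPD_iterate_Lop φ hJK n

theorem Lop_eq_of_tendsto_iterate {K Kinf : X → X → ℂ}
    (hlim : ∀ s t, Tendsto (fun n => ((Lop φ)^[n] K) s t) atTop (nhds (Kinf s t))) :
    Lop φ Kinf = Kinf := by
  funext s t
  have hshift : Tendsto (fun n => ((Lop φ)^[n + 1] K) s t) atTop (nhds (Kinf s t)) :=
    (hlim s t).comp (tendsto_add_atTop_nat 1)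
  refine tendsto_nhds_unique ?_ hshift
  simp only [Function.iterate_succ_apply']
  exact tendsto_finsetSum _ fun i _ => hlim (φ i s) (φ i t)

end Lop

theorem limit_kernel_invariant_and_minimal_general {X : Type*} {m : ℕ}
    (φ : Fin m → X → X) (K : X → X → ℂ)
    (hsub : IsPD (fun s t => Lop φ K s t - K s t))
    (Kinf : X → X → ℂ)
    (hlim : ∀ s t : X,
      Tendsto (fun n => ((Lop φ)^[n] K) s t) atTop (nhds (Kinf s t))) :
    Lop φ Kinf = Kinf ∧
    IsPD (fun s t => Kinf s t - K s t) ∧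
    (∀ J : X → X → ℂ, IsPD J → IsPD (fun s t => J s t - K s t) →
      Lop φ J = J → IsPD (fun s t => J s t - Kinf s t)) := by
  refine ⟨Lop_eq_of_tendsto_iterate φ hlim, ?_, ?_⟩
  · exact IsPD.of_tendsto (fun s t => (hlim s t).sub tendsto_const_nhds)
      (isPD_iterate_Lop_sub_self φ hsub)
  · intro J _ hJK hLJ
    exact IsPD.of_tendsto (fun s t => tendsto_const_nhds.sub (hlim s t))
      (isPD_sub_iterate_Lop_of_fixed φ hJK hLJ)

/-- the limit kernel `K_∞` is `L`-invariant, majorizes `K`, and is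
the minimal `L`-invariant positive definite majorant of `K`. -/
theorem limit_kernel_invariant_and_minimal {X : Type*} {m : ℕ}
    (φ : Fin m → X → X) (K : X → X → ℂ) (hK : IsPD K)
    (hsub : IsPD (fun s t => Lop φ K s t - K s t))
    (hbdd : ∀ s : X, ∃ C : ℝ, ∀ n : ℕ, (((Lop φ)^[n] K) s s).re ≤ C)
    (Kinf : X → X → ℂ)
    (hlim : ∀ s t : X,
      Tendsto (fun n => ((Lop φ)^[n] K) s t) atTop (nhds (Kinf s t))) :
    Lop φ Kinf = Kinf ∧
    IsPD (fun s t => Kinf s t - K s t) ∧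
    (∀ J : X → X → ℂ, IsPD J → IsPD (fun s t => J s t - K s t) →
      Lop φ J = J → IsPD (fun s t => J s t - Kinf s t)) :=
  limit_kernel_invariant_and_minimal_general φ K hsub Kinf hlim
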